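/- Let v be an admissible potential with range R₀, let (a,u) be an even-wave scattering solution for v, and let R > R₀. Then for every continuously differentiable function f : ℝ → ℝ with f(−R) = f(R) = 1, one has ∫_{−R}^{R} ( 2·f'(x)² + v(x)·f(x)² ) dx ≥ 4/(R − a). Moreover, equality holds for the scattering trial function f₀(x) := u(x)/(R − a), i.e. ∫_{−R}^{R} ( 2·f₀'(x)² + v(x)·f₀(x)² ) dx = 4/(R − a). -/

import Mathlib

open MeasureTheory Real

noncomputable section

/-- An admissible potential with range `R₀`. -/
structure AdmissiblePotential (v : ℝ → ℝ) (R₀ : ℝ) : Prop where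
  range_pos : 0 < R₀
  cont : Continuous v
  nonneg : ∀ x, 0 ≤ v x
  even : ∀ x, v (-x) = v x
  vanish : ∀ x, R₀ < |x| → v x = 0

/-- An even-wave scattering solution `(a, u)` for the potential `v`. -/
structure EvenScatteringSolution (v : ℝ → ℝ) (R₀ : ℝ) (a : ℝ) (u : ℝ → ℝ) : Prop where
  smooth : ContDiff ℝ 2 u
  even : ∀ x, u (-x) = u x
  pos : ∀ x, 0 < u x
  ode : ∀ x, deriv (deriv u) x = (1 / 2) * v x * u x
  linear : ∀ x, R₀ ≤ x → u x = x - a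

/-!
Write `E(f) = ∫_{-R}^{R} (2 f'² + v f²)`. Since `2 u'' = v u`, integration by parts gives
`∫ (2 g' u' + v g u) = 2 [g u']_{-R}^{R}` for every `C¹` function `g`. For `f(±R) = 1` the difference
`g = f - u / (R - a)` vanishes at `±R`, so the cross term drops out and
`E(f) = E(g) + E(u) / (R - a)² ≥ E(u) / (R - a)²`, with equality for `f = u / (R - a)`.
Finally `E(u) = 2 [u u']_{-R}^{R} = 4 (R - a)`, because `u = x - a` near `R` and `u'` is odd.
-/

def energy (v : ℝ → ℝ) (a b : ℝ) (f : ℝ → ℝ) : ℝ :=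
  ∫ x in a..b, (2 * deriv f x ^ 2 + v x * f x ^ 2)

lemma energy_nonneg {v : ℝ → ℝ} (hv : ∀ x, 0 ≤ v x) {a b : ℝ} (hab : a ≤ b) (f : ℝ → ℝ) :
    0 ≤ energy v a b f :=
  intervalIntegral.integral_nonneg hab fun x _ =>
    add_nonneg (by positivity) (mul_nonneg (hv x) (sq_nonneg _))

lemma energy_div_const (v : ℝ → ℝ) (a b : ℝ) (f : ℝ → ℝ) (c : ℝ) :
    energy v a b (fun x => f x / c) = energy v a b f / c ^ 2 := by
  simp only [energy, deriv_div_const, ← intervalIntegral.integral_div]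
  congr 1 with x
  ring

section Green

variable {v u : ℝ → ℝ} (hv : Continuous v) (hu : ContDiff ℝ 2 u)
  (hode : ∀ x, deriv (deriv u) x = 1 / 2 * v x * u x)
include hv hu hode

/-- Green's identity for a solution `u` of `2 u'' = v u`. -/
theorem integral_deriv_mul_deriv_add_eq {g : ℝ → ℝ} (hg : ContDiff ℝ 1 g) (a b : ℝ) :
    ∫ x in a..b, (2 * deriv g x * deriv u x + v x * g x * u x) =
      2 * (g b * deriv u b - g a * deriv u a) := by
  have hu' : ContDiff ℝ 1 (deriv u) := hu.iterate_deriv' 1 1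
  have hu'' : ∀ x, HasDerivAt (deriv u) (1 / 2 * v x * u x) x := fun x =>
    hode x ▸ (hu'.differentiable one_ne_zero x).hasDerivAt
  have hprod : ∀ x ∈ Set.uIcc a b, HasDerivAt (fun y => 2 * (g y * deriv u y))
      (2 * deriv g x * deriv u x + v x * g x * u x) x := fun x _ =>
    ((((hg.differentiable one_ne_zero x).hasDerivAt).mul (hu'' x)).const_mul 2).congr_deriv
      (by ring)
  have hint : Continuous fun x => 2 * deriv g x * deriv u x + v x * g x * u x := by
    have hg' := hg.continuous_deriv le_rfl
    have hu'c := hu'.continuous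
    fun_prop
  rw [intervalIntegral.integral_eq_sub_of_hasDerivAt hprod (hint.intervalIntegrable a b)]
  ring

theorem energy_eq_boundary (a b : ℝ) :
    energy v a b u = 2 * (u b * deriv u b - u a * deriv u a) := by
  rw [energy, ← integral_deriv_mul_deriv_add_eq hv hu hode (hu.of_le (by norm_num))]
  congr 1 with x
  ring

/-- Pythagoras for `energy`: the cross term vanishes by Green's identity. -/
theorem energy_eq_energy_sub_add {f : ℝ → ℝ} (hf : ContDiff ℝ 1 f) {a b c : ℝ}
    (ha : f a = c * u a) (hb : f b = c * u b) :
    energy v a b f = energy v a b (fun x => f x - c * u x) + c ^ 2 * energy v a b u := by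
  set g := fun x => f x - c * u x with hg_def
  have hu₁ : ContDiff ℝ 1 u := hu.of_le (by norm_num)
  have hg : ContDiff ℝ 1 g := hf.sub (contDiff_const.mul hu₁)
  have hdg : ∀ x, deriv g x = deriv f x - c * deriv u x := fun x => by
    rw [hg_def, deriv_fun_sub (hf.differentiable one_ne_zero x)
      ((hu₁.differentiable one_ne_zero x).const_mul c), deriv_const_mul_field]
  have hcross : ∫ x in a..b, (2 * deriv g x * deriv u x + v x * g x * u x) = 0 := by
    rw [integral_deriv_mul_deriv_add_eq hv hu hode hg]
    simp [hg_def, ha, hb]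
  have hsplit : ∀ x, 2 * deriv f x ^ 2 + v x * f x ^ 2 =
      (2 * deriv g x ^ 2 + v x * g x ^ 2 + c ^ 2 * (2 * deriv u x ^ 2 + v x * u x ^ 2)) +
        2 * c * (2 * deriv g x * deriv u x + v x * g x * u x) := fun x => by
    rw [hdg]; ring
  have hf' := hf.continuous_deriv le_rfl
  have hg' := hg.continuous_deriv le_rfl
  have hu' := hu₁.continuous_deriv le_rfl
  simp only [energy, hsplit]
  rw [intervalIntegral.integral_add, intervalIntegral.integral_add,
    intervalIntegral.integral_const_mul, intervalIntegral.integral_const_mul, hcross, mul_zero,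
    add_zero]
  all_goals exact Continuous.intervalIntegrable (by fun_prop) a b

end Green

namespace EvenScatteringSolution

variable {v : ℝ → ℝ} {R₀ a : ℝ} {u : ℝ → ℝ} (hu : EvenScatteringSolution v R₀ a u)
include hu

lemma sub_pos_of_le {x : ℝ} (hx : R₀ ≤ x) : 0 < x - a :=
  hu.linear x hx ▸ hu.pos x

lemma deriv_eq_one {x : ℝ} (hx : R₀ < x) : deriv u x = 1 := by
  have hlin : (fun y => y - a) =ᶠ[nhds x] u :=
    Filter.eventually_of_mem (Ioi_mem_nhds hx) fun y hy => (hu.linear y (le_of_lt hy)).symm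
  rw [← hlin.deriv_eq, deriv_sub_const, deriv_id'']

lemma deriv_neg (x : ℝ) : deriv u (-x) = -deriv u x := by
  have h := deriv_comp_neg (f := u) (x := x)
  simp only [hu.even] at h
  rw [h, neg_neg]

lemma energy_eq (hv : Continuous v) {R : ℝ} (hR : R₀ < R) :
    energy v (-R) R u = 4 * (R - a) := by
  rw [energy_eq_boundary hv hu.smooth hu.ode, hu.deriv_neg, hu.even, hu.linear R hR.le,
    hu.deriv_eq_one hR]
  ring

end EvenScatteringSolution

theorem statement_4 (v : ℝ → ℝ) (R₀ a : ℝ) (u : ℝ → ℝ)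
    (hv : AdmissiblePotential v R₀) (hu : EvenScatteringSolution v R₀ a u)
    (R : ℝ) (hR : R₀ < R) :
    (∀ f : ℝ → ℝ, ContDiff ℝ 1 f → f (-R) = 1 → f R = 1 →
      4 / (R - a) ≤ ∫ x in Set.Icc (-R) R, (2 * (deriv f x) ^ 2 + v x * (f x) ^ 2)) ∧
    (∫ x in Set.Icc (-R) R,
        (2 * (deriv (fun y => u y / (R - a)) x) ^ 2 + v x * (u x / (R - a)) ^ 2)) =
      4 / (R - a) := by
  have hRa : 0 < R - a := hu.sub_pos_of_le hR.le
  have hRR : -R ≤ R := by linarith [hv.range_pos]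
  have hE : energy v (-R) R u = 4 * (R - a) := hu.energy_eq hv.cont hR
  have huR : u R = R - a := hu.linear R hR.le
  simp only [integral_Icc_eq_integral_Ioc, ← intervalIntegral.integral_of_le hRR]
  refine ⟨fun f hf hfm hfp => ?_, ?_⟩
  · have hsplit := energy_eq_energy_sub_add hv.cont hu.smooth hu.ode hf (c := 1 / (R - a))
      (by rw [hfm, hu.even, huR]; field_simp) (by rw [hfp, huR]; field_simp)
    have hrest := energy_nonneg hv.nonneg hRR (fun x => f x - 1 / (R - a) * u x)
    change 4 / (R - a) ≤ energy v (-R) R f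
    have hc : (1 / (R - a)) ^ 2 * (4 * (R - a)) = 4 / (R - a) := by field_simp
    rw [hsplit, hE]
    linarith
  · change energy v (-R) R (fun y => u y / (R - a)) = _
    rw [energy_div_const, hE]
    field_simp
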